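/- arXiv:2202.01660 — 7 statements merged into one kernel-verified Lean document; each statement's English description precedes it below -/
import Mathlib

section
/- For every Boolean function f : Bool → Bool → Bool → Bool there exists a CNF formula over three variables consisting of at most 4 clauses, each clause containing at most 3 literals, such that for all a, b, c : Bool the assignment of a, b, c to the three variables satisfies the formula if and only if f a b c = true. -/
/-- Optimal ≤2-clause CNF (over variables 1 and 2 of `Fin 3`) for a
2-variable Boolean function given by its truth table `g00 g01 g10 g11`. -/
def cnf2 : Bool → Bool → Bool → Bool → List (List (Fin 3 × Bool))
  | true, true, true, true => []
  | false, true, true, true => [[(1,true),(2,true)]]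
  | true, false, true, true => [[(1,true),(2,false)]]
  | true, true, false, true => [[(1,false),(2,true)]]
  | true, true, true, false => [[(1,false),(2,false)]]
  | false, false, true, true => [[(1,true)]]
  | false, true, false, true => [[(2,true)]]
  | false, true, true, false => [[(1,true),(2,true)],[(1,false),(2,false)]]
  | true, false, false, true => [[(1,true),(2,false)],[(1,false),(2,true)]]
  | true, false, true, false => [[(2,false)]]
  | true, true, false, false => [[(1,false)]]
  | true, false, false, false => [[(1,false)],[(2,false)]]
  | false, true, false, false => [[(1,false)],[(2,true)]]
  | false, false, true, false => [[(1,true)],[(2,false)]]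
  | false, false, false, true => [[(1,true)],[(2,true)]]
  | false, false, false, false => [[]]

/-- ≤4-clause CNF for a 3-variable function: split on variable 0. -/
def cnf3 (v0 v1 v2 v3 v4 v5 v6 v7 : Bool) : List (List (Fin 3 × Bool)) :=
  (cnf2 v0 v1 v2 v3).map (fun cl => ((0 : Fin 3), true) :: cl) ++
  (cnf2 v4 v5 v6 v7).map (fun cl => ((0 : Fin 3), false) :: cl)

theorem cnf3_key : ∀ v0 v1 v2 v3 v4 v5 v6 v7 : Bool,
    (cnf3 v0 v1 v2 v3 v4 v5 v6 v7).length ≤ 4 ∧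
    (∀ cl ∈ cnf3 v0 v1 v2 v3 v4 v5 v6 v7, cl.length ≤ 3) ∧
    ∀ a b c : Bool,
      (∀ cl ∈ cnf3 v0 v1 v2 v3 v4 v5 v6 v7, ∃ l ∈ cl, (![a, b, c]) l.1 = l.2) ↔
        (cond a (cond b (cond c v7 v6) (cond c v5 v4))
               (cond b (cond c v3 v2) (cond c v1 v0))) = true := by
  decide

/-- A literal is a pair (variable, polarity): it evaluates to true under an
assignment `σ` iff `σ` maps the variable to the polarity.  A clause is a list
of literals (disjunction, possibly empty), and a CNF formula is a list of
clauses (conjunction).  An assignment satisfies the formula iff every clause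
contains a literal evaluating to true. -/
theorem three_var_fun_has_small_cnf (f : Bool → Bool → Bool → Bool) :
    ∃ C : List (List (Fin 3 × Bool)),
      C.length ≤ 4 ∧
      (∀ cl ∈ C, cl.length ≤ 3) ∧
      ∀ a b c : Bool,
        (∀ cl ∈ C, ∃ l ∈ cl, (![a, b, c]) l.1 = l.2) ↔ f a b c = true := by
  obtain ⟨h1, h2, h3⟩ := cnf3_key (f false false false) (f false false true)
    (f false true false) (f false true true) (f true false false)
    (f true false true) (f true true false) (f true true true)
  exact ⟨_, h1, h2, fun a b c => by
    have := h3 a b c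
    cases a <;> cases b <;> cases c <;> simpa using this⟩
end

section
/- For every n ≥ 1 and every Boolean function f : (Fin n → Bool) → Bool there exists a CNF formula over the n variables consisting of at most 2^(n−1) clauses, each clause containing at most n literals, such that an assignment σ : Fin n → Bool satisfies the formula if and only if f σ = true. -/
/-- The "base" part of a clause: for each of the first `m` variables, the
literal asserting disagreement with `τ`. -/
def baseCl (m : ℕ) (τ : Fin m → Bool) : List (Fin (m+1) × Bool) :=
  (List.finRange m).map (fun i => (i.castSucc, !τ i))

/-- Optional clause associated to a pair of assignments `snoc τ false`,
`snoc τ true`. -/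
def clOpt (m : ℕ) (f : (Fin (m+1) → Bool) → Bool) (τ : Fin m → Bool) :
    Option (List (Fin (m+1) × Bool)) :=
  match f (Fin.snoc τ false), f (Fin.snoc τ true) with
  | false, false => some (baseCl m τ)
  | false, true  => some (baseCl m τ ++ [(Fin.last m, true)])
  | true, false  => some (baseCl m τ ++ [(Fin.last m, false)])
  | true, true   => none

lemma baseCl_length (m : ℕ) (τ : Fin m → Bool) : (baseCl m τ).length = m := by
  simp [baseCl]

lemma baseCl_sat (m : ℕ) (τ : Fin m → Bool) (σ : Fin (m+1) → Bool) :
    (∃ l ∈ baseCl m τ, σ l.1 = l.2) ↔ ∃ i, σ i.castSucc ≠ τ i := by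
  simp only [baseCl, List.mem_map, List.mem_finRange]
  constructor
  · rintro ⟨l, ⟨i, -, rfl⟩, h⟩
    exact ⟨i, by cases hx : σ i.castSucc <;> cases hy : τ i <;> simp_all⟩
  · rintro ⟨i, h⟩
    exact ⟨(i.castSucc, !τ i), ⟨i, trivial, rfl⟩,
      by cases hx : σ i.castSucc <;> cases hy : τ i <;> simp_all⟩

/-- A literal is a pair (variable, polarity): it evaluates to true under an
assignment `σ` iff `σ` maps the variable to the polarity.  A clause is a list
of literals (disjunction, possibly empty), and a CNF formula is a list of
clauses (conjunction).  An assignment satisfies the formula iff every clause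
contains a literal evaluating to true. -/
theorem n_var_fun_has_small_cnf (n : ℕ) (hn : 1 ≤ n) (f : (Fin n → Bool) → Bool) :
    ∃ C : List (List (Fin n × Bool)),
      C.length ≤ 2 ^ (n - 1) ∧
      (∀ cl ∈ C, cl.length ≤ n) ∧
      ∀ σ : Fin n → Bool,
        (∀ cl ∈ C, ∃ l ∈ cl, σ l.1 = l.2) ↔ f σ = true := by
  obtain ⟨m, rfl⟩ : ∃ m, n = m + 1 := ⟨n - 1, (Nat.succ_pred_eq_of_pos hn).symm⟩
  refine ⟨(Finset.univ : Finset (Fin m → Bool)).toList.filterMap (clOpt m f), ?_, ?_, ?_⟩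
  · calc ((Finset.univ : Finset (Fin m → Bool)).toList.filterMap (clOpt m f)).length
        ≤ (Finset.univ : Finset (Fin m → Bool)).toList.length :=
          List.length_filterMap_le _ _
      _ = 2 ^ m := by simp [Finset.length_toList]
      _ ≤ 2 ^ (m + 1 - 1) := le_refl _
  · intro cl hcl
    rw [List.mem_filterMap] at hcl
    obtain ⟨τ, -, hτ⟩ := hcl
    unfold clOpt at hτ
    rcases h0 : f (Fin.snoc τ false) <;> rcases h1 : f (Fin.snoc τ true) <;>
      rw [h0, h1] at hτ <;> simp only [Option.some.injEq, reduceCtorEq] at hτ <;>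
      first
      | exact absurd hτ (by simp)
      | (subst hτ; simp [baseCl_length])
  · intro σ
    set τs : Fin m → Bool := fun i => σ i.castSucc with hτs
    have hσ : Fin.snoc τs (σ (Fin.last m)) = σ := Fin.snoc_init_self σ
    constructor
    · intro h
      have hmem : ∀ cl, clOpt m f τs = some cl →
          cl ∈ (Finset.univ : Finset (Fin m → Bool)).toList.filterMap (clOpt m f) := by
        intro cl hcl
        exact List.mem_filterMap.mpr ⟨τs, by simp [Finset.mem_toList], hcl⟩
      have hbase : ¬ ∃ l ∈ baseCl m τs, σ l.1 = l.2 := by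
        rw [baseCl_sat]; push_neg; intro i; rfl
      rcases h0 : f (Fin.snoc τs false) <;> rcases h1 : f (Fin.snoc τs true)
      · -- both false: contradiction
        exfalso
        have := h _ (hmem (baseCl m τs) (by unfold clOpt; rw [h0, h1]))
        exact hbase this
      · -- f(..false)=false, f(..true)=true
        have := h _ (hmem (baseCl m τs ++ [(Fin.last m, true)])
          (by unfold clOpt; rw [h0, h1]))
        obtain ⟨l, hl, hsat⟩ := this
        rcases List.mem_append.mp hl with hl | hl
        · exact absurd ⟨l, hl, hsat⟩ hbase
        · simp only [List.mem_singleton] at hl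
          subst hl
          rw [← hσ]
          simpa [hsat] using h1
      · -- f(..false)=true, f(..true)=false
        have := h _ (hmem (baseCl m τs ++ [(Fin.last m, false)])
          (by unfold clOpt; rw [h0, h1]))
        obtain ⟨l, hl, hsat⟩ := this
        rcases List.mem_append.mp hl with hl | hl
        · exact absurd ⟨l, hl, hsat⟩ hbase
        · simp only [List.mem_singleton] at hl
          subst hl
          rw [← hσ]
          simpa [hsat] using h0
      · -- both true
        rw [← hσ]
        cases σ (Fin.last m) <;> assumption
    · intro hf cl hcl
      rw [List.mem_filterMap] at hcl
      obtain ⟨τ, -, hτ⟩ := hcl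
      by_cases hτσ : τ = τs
      · subst hτσ
        have hb : f (Fin.snoc τs (σ (Fin.last m))) = true := by rw [hσ]; exact hf
        rcases h0 : f (Fin.snoc τs false) <;> rcases h1 : f (Fin.snoc τs true) <;>
          unfold clOpt at hτ <;> rw [h0, h1] at hτ <;>
          simp only [Option.some.injEq, reduceCtorEq] at hτ
        · exfalso; cases hb' : σ (Fin.last m) <;> rw [hb'] at hb <;> simp_all
        · subst hτ
          have : σ (Fin.last m) = true := by
            cases hb' : σ (Fin.last m)
            · rw [hb'] at hb; rw [h0] at hb; exact absurd hb (by simp)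
            · rfl
          exact ⟨(Fin.last m, true), List.mem_append_right _ (List.mem_singleton.mpr rfl), this⟩
        · subst hτ
          have : σ (Fin.last m) = false := by
            cases hb' : σ (Fin.last m)
            · rfl
            · rw [hb'] at hb; rw [h1] at hb; exact absurd hb (by simp)
          exact ⟨(Fin.last m, false), List.mem_append_right _ (List.mem_singleton.mpr rfl), this⟩
      · -- τ ≠ τs : some base literal is satisfied
        have : ∃ i, σ i.castSucc ≠ τ i := by
          by_contra hc
          push_neg at hc
          exact hτσ (funext fun i => (hc i).symm)
        have hsat : ∃ l ∈ baseCl m τ, σ l.1 = l.2 := (baseCl_sat m τ σ).mpr this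
        obtain ⟨l, hl, hls⟩ := hsat
        rcases h0 : f (Fin.snoc τ false) <;> rcases h1 : f (Fin.snoc τ true) <;>
          unfold clOpt at hτ <;> rw [h0, h1] at hτ <;>
          simp only [Option.some.injEq, reduceCtorEq] at hτ <;>
          subst hτ <;>
          first
          | exact ⟨l, hl, hls⟩
          | exact ⟨l, List.mem_append_left _ hl, hls⟩
end

section
/- Let F be a finite index set, V a finite set of Boolean variables, and for each p ∈ F let C_p be a CNF formula over V having at least 1 and at most 2 clauses, and D_p a predicate on assignments σ : V → Bool such that σ satisfies C_p if and only if D_p σ holds. For an assignment σ let δ(σ) be the number of p ∈ F with D_p σ, and let SAT(σ) be the total number, summed over p ∈ F, of clauses of C_p made true by σ. If ρ > 0 is a real number such that min over all assignments σ of δ(σ) is at least |F|/ρ, then the minimum over all assignments σ of SAT(σ) is at most (1+ρ) times the minimum over all assignments σ of δ(σ). -/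
/-- A literal is a pair (variable, polarity); it is true under `σ` iff `σ`
maps the variable to the polarity.  A clause (list of literals) is made true
by `σ` iff some of its literals is true under `σ`. -/
def clauseTrue {V : Type} (σ : V → Bool) (cl : List (V × Bool)) : Bool :=
  cl.any fun l => σ l.1 == l.2

/-- Total number, over all indices `p`, of clauses of the CNF formula `C p`
made true by the assignment `σ`. -/
def satCount {F V : Type} [Fintype F] (C : F → List (List (V × Bool)))
    (σ : V → Bool) : ℕ :=
  ∑ p : F, (C p).countP (clauseTrue σ)

/-- Number of indices `p` such that the predicate `D p` holds of `σ`. -/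
noncomputable def dCount {F V : Type} [Fintype F] (D : F → (V → Bool) → Prop)
    (σ : V → Bool) : ℕ :=
  Nat.card {p : F // D p σ}


/-! An assignment `σ` minimising `δ` fails some clause of every `C p` with `¬ D p σ`, so it
satisfies at most one of the (at most two) clauses of such a `C p`, and at most two otherwise.
Hence `SAT(σ) ≤ |F| + δ(σ) ≤ ρ δ(σ) + δ(σ)`. -/

theorem List.countP_le_one_add_ite {α : Type*} {l : List α} {q : α → Bool} {P : Prop}
    [Decidable P] (hl : l.length ≤ 2) (hP : (∀ a ∈ l, q a = true) → P) :
    l.countP q ≤ 1 + if P then 1 else 0 := by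
  by_cases hp : P
  · simpa [hp] using List.countP_le_length.trans hl
  · have hfail : ∃ a ∈ l, q a = false := by
      by_contra! hall
      exact hp (hP fun a ha => by simpa using hall a ha)
    have := List.countP_lt_length_iff.2 hfail
    simp only [hp, if_false]
    omega

theorem satCount_le_card_add_dCount {F V : Type} [Fintype F]
    {C : F → List (List (V × Bool))} {D : F → (V → Bool) → Prop}
    (hlen : ∀ p, (C p).length ≤ 2)
    (hsat : ∀ p σ, (∀ cl ∈ C p, clauseTrue σ cl = true) → D p σ) (σ : V → Bool) :
    satCount C σ ≤ Fintype.card F + dCount D σ := by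
  classical
  have hd : dCount D σ = ∑ p : F, if D p σ then 1 else 0 := by
    rw [dCount, Nat.card_eq_fintype_card, Fintype.card_subtype, Finset.card_filter]
  rw [satCount, hd, ← Finset.card_univ, Finset.card_eq_sum_ones, ← Finset.sum_add_distrib]
  exact Finset.sum_le_sum fun p _ => List.countP_le_one_add_ite (hlen p) (hsat p σ)

theorem min_satCount_le_of_min_dCount_large_general {F V : Type} [Fintype F]
    (C : F → List (List (V × Bool))) (D : F → (V → Bool) → Prop)
    (hlen : ∀ p, 1 ≤ (C p).length ∧ (C p).length ≤ 2)
    (hiff : ∀ p σ, (∀ cl ∈ C p, clauseTrue σ cl = true) ↔ D p σ)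
    (ρ : ℝ) (hρ : 0 < ρ)
    (hmin : (Fintype.card F : ℝ) / ρ ≤ ((sInf (Set.range (dCount D)) : ℕ) : ℝ)) :
    ((sInf (Set.range (satCount C)) : ℕ) : ℝ) ≤
      (1 + ρ) * ((sInf (Set.range (dCount D)) : ℕ) : ℝ) := by
  set m := sInf (Set.range (dCount D))
  obtain ⟨σ, hσ⟩ : m ∈ Set.range (dCount D) := Nat.sInf_mem ⟨_, Set.mem_range_self fun _ => true⟩
  have hsat : sInf (Set.range (satCount C)) ≤ Fintype.card F + m := by
    rw [← hσ]
    exact (Nat.sInf_le (Set.mem_range_self σ)).trans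
      (satCount_le_card_add_dCount (fun p => (hlen p).2) (fun p σ => (hiff p σ).1) σ)
  have hcard : (Fintype.card F : ℝ) ≤ ρ * m := by
    rw [div_le_iff₀ hρ] at hmin
    linarith
  calc ((sInf (Set.range (satCount C)) : ℕ) : ℝ) ≤ Fintype.card F + m := by exact_mod_cast hsat
    _ ≤ (1 + ρ) * m := by linarith

theorem min_satCount_le_of_min_dCount_large {F V : Type} [Fintype F] [Fintype V]
    (C : F → List (List (V × Bool))) (D : F → (V → Bool) → Prop)
    (hlen : ∀ p, 1 ≤ (C p).length ∧ (C p).length ≤ 2)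
    (hiff : ∀ p σ, (∀ cl ∈ C p, clauseTrue σ cl = true) ↔ D p σ)
    (ρ : ℝ) (hρ : 0 < ρ)
    (hmin : (Fintype.card F : ℝ) / ρ ≤ ((sInf (Set.range (dCount D)) : ℕ) : ℝ)) :
    ((sInf (Set.range (satCount C)) : ℕ) : ℝ) ≤
      (1 + ρ) * ((sInf (Set.range (dCount D)) : ℕ) : ℝ) :=
  min_satCount_le_of_min_dCount_large_general C D hlen hiff ρ hρ hmin
end

section
/- Let F be a finite index set, V a finite set of Boolean variables, M ≥ 1 a natural number, and for each p ∈ F let C_p be a CNF formula over V having at least 1 and at most M clauses, and D_p a predicate on assignments σ : V → Bool such that σ satisfies C_p if and only if D_p σ holds. For an assignment σ let δ(σ) be the number of p ∈ F with D_p σ, and let SAT(σ) be the total number, summed over p ∈ F, of clauses of C_p made true by σ. Suppose ρ > 0 and α ≥ 1 are real numbers, the minimum over all assignments of δ is at least (M−1)·|F|/ρ, and σ* is an assignment with SAT(σ*) ≤ α · (minimum over all assignments of SAT). Then δ(σ*) ≤ α(1+ρ) · (minimum over all assignments of δ). -/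
/-!
A formula `C p` that is satisfied contributes between `1` and `M` true clauses to `satCount`,
one that is not contributes at most `M - 1`. Hence `dCount ≤ satCount ≤ (M - 1)|F| + dCount`
pointwise, so the optimum of `satCount` exceeds that of `dCount` by at most `(M - 1)|F|`, which
the hypothesis on the optimum of `dCount` bounds by `ρ` times that optimum.
-/

namespace List

variable {α : Type*} {l : List α} {q : α → Bool} {P : Prop} [Decidable P]

lemma ite_le_countP (hl : 1 ≤ l.length) (hP : (∀ a ∈ l, q a) ↔ P) :
    (if P then 1 else 0) ≤ l.countP q := by
  split_ifs with h
  · rwa [countP_eq_length.mpr (hP.mpr h)]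
  · exact Nat.zero_le _

lemma countP_le_length_sub_one_add_ite (hP : (∀ a ∈ l, q a) ↔ P) :
    l.countP q ≤ (l.length - 1) + if P then 1 else 0 := by
  split_ifs with h
  · have := l.countP_le_length (p := q)
    omega
  · have : l.countP q < l.length := countP_lt_length_iff.mpr (by simpa [← hP] using h)
    omega

end List

section

variable {F V : Type} [Fintype F] {C : F → List (List (V × Bool))} {D : F → (V → Bool) → Prop}

lemma dCount_eq_sum_ite [∀ p σ, Decidable (D p σ)] (σ : V → Bool) :
    dCount D σ = ∑ p, if D p σ then 1 else 0 := by
  rw [dCount, Nat.card_eq_fintype_card, Fintype.card_subtype, Finset.card_filter]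

lemma dCount_le_satCount (hlen : ∀ p, 1 ≤ (C p).length)
    (hiff : ∀ p σ, (∀ cl ∈ C p, clauseTrue σ cl = true) ↔ D p σ) (σ : V → Bool) :
    dCount D σ ≤ satCount C σ := by
  classical
  rw [dCount_eq_sum_ite, satCount]
  exact Finset.sum_le_sum fun p _ => List.ite_le_countP (hlen p) (hiff p σ)

lemma satCount_le_dCount_add (M : ℕ) (hlen : ∀ p, (C p).length ≤ M)
    (hiff : ∀ p σ, (∀ cl ∈ C p, clauseTrue σ cl = true) ↔ D p σ) (σ : V → Bool) :
    satCount C σ ≤ (M - 1) * Fintype.card F + dCount D σ := by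
  classical
  rw [dCount_eq_sum_ite, satCount]
  calc ∑ p, (C p).countP (clauseTrue σ)
      ≤ ∑ p, ((M - 1) + if D p σ then 1 else 0) := Finset.sum_le_sum fun p _ =>
        (List.countP_le_length_sub_one_add_ite (hiff p σ)).trans
          (Nat.add_le_add_right (Nat.sub_le_sub_right (hlen p) 1) _)
    _ = (M - 1) * Fintype.card F + ∑ p, if D p σ then 1 else 0 := by
      rw [Finset.sum_add_distrib, Finset.sum_const, Finset.card_univ, smul_eq_mul, mul_comm]

lemma sInf_range_satCount_le (M : ℕ) (hlen : ∀ p, (C p).length ≤ M)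
    (hiff : ∀ p σ, (∀ cl ∈ C p, clauseTrue σ cl = true) ↔ D p σ) :
    sInf (Set.range (satCount C)) ≤ (M - 1) * Fintype.card F + sInf (Set.range (dCount D)) := by
  obtain ⟨σ₀, hσ₀⟩ := Nat.sInf_mem (Set.range_nonempty (dCount D))
  rw [← hσ₀]
  exact (Nat.sInf_le (Set.mem_range_self σ₀)).trans (satCount_le_dCount_add M hlen hiff σ₀)

end

theorem approx_transfer_minMsat_general {F V : Type} [Fintype F]
    (M : ℕ)
    (C : F → List (List (V × Bool))) (D : F → (V → Bool) → Prop)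
    (hlen : ∀ p, 1 ≤ (C p).length ∧ (C p).length ≤ M)
    (hiff : ∀ p σ, (∀ cl ∈ C p, clauseTrue σ cl = true) ↔ D p σ)
    (ρ α : ℝ) (hρ : 0 < ρ) (hα : 1 ≤ α)
    (hmin : (((M - 1) * Fintype.card F : ℕ) : ℝ) / ρ ≤
      ((sInf (Set.range (dCount D)) : ℕ) : ℝ))
    (σstar : V → Bool)
    (happrox : (satCount C σstar : ℝ) ≤
      α * ((sInf (Set.range (satCount C)) : ℕ) : ℝ)) :
    (dCount D σstar : ℝ) ≤
      α * (1 + ρ) * ((sInf (Set.range (dCount D)) : ℕ) : ℝ) := by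
  have hsInf : ((sInf (Set.range (satCount C)) : ℕ) : ℝ) ≤
      (1 + ρ) * ((sInf (Set.range (dCount D)) : ℕ) : ℝ) := by
    have hcast : ((sInf (Set.range (satCount C)) : ℕ) : ℝ) ≤
        (((M - 1) * Fintype.card F : ℕ) : ℝ) + ((sInf (Set.range (dCount D)) : ℕ) : ℝ) := by
      exact_mod_cast sInf_range_satCount_le M (fun p => (hlen p).2) hiff
    have hgap := (div_le_iff₀ hρ).mp hmin
    linarith
  calc (dCount D σstar : ℝ) ≤ satCount C σstar := by
        exact_mod_cast dCount_le_satCount (fun p => (hlen p).1) hiff σstar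
    _ ≤ α * ((sInf (Set.range (satCount C)) : ℕ) : ℝ) := happrox
    _ ≤ α * ((1 + ρ) * ((sInf (Set.range (dCount D)) : ℕ) : ℝ)) := by gcongr
    _ = α * (1 + ρ) * ((sInf (Set.range (dCount D)) : ℕ) : ℝ) := by ring

theorem approx_transfer_minMsat {F V : Type} [Fintype F] [Fintype V]
    (M : ℕ) (hM : 1 ≤ M)
    (C : F → List (List (V × Bool))) (D : F → (V → Bool) → Prop)
    (hlen : ∀ p, 1 ≤ (C p).length ∧ (C p).length ≤ M)
    (hiff : ∀ p σ, (∀ cl ∈ C p, clauseTrue σ cl = true) ↔ D p σ)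
    (ρ α : ℝ) (hρ : 0 < ρ) (hα : 1 ≤ α)
    (hmin : (((M - 1) * Fintype.card F : ℕ) : ℝ) / ρ ≤
      ((sInf (Set.range (dCount D)) : ℕ) : ℝ))
    (σstar : V → Bool)
    (happrox : (satCount C σstar : ℝ) ≤
      α * ((sInf (Set.range (satCount C)) : ℕ) : ℝ)) :
    (dCount D σstar : ℝ) ≤
      α * (1 + ρ) * ((sInf (Set.range (dCount D)) : ℕ) : ℝ) :=
  approx_transfer_minMsat_general M C D hlen hiff ρ α hρ hα hmin σstar happrox
end

section
/- Let P be a conditional approval profile of in-degree at most 1 and let y be an issue with no neighbors in the global dependency graph of P (so every voter's ballot on y is unconditional and no voter's ballot is conditional with parent y). Let P' be the profile on the issues I ∖ {y} obtained from P by deleting the issue y and all ballots on y, and for v ∈ Bool let c(y,v) be the number of voters dissatisfied with y when y takes value v. Then OPT(P) = OPT(P') + min(c(y,true), c(y,false)). -/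
/-- A ballot of one voter on one binary issue: either unconditional, given by
a set of approved values, or conditional on a parent issue, given by a set of
approved (parent value, own value) combinations.  Since every conditional
ballot has a single parent, every voter's dependency graph automatically has
in-degree at most 1. -/
inductive CBallot (I : Type) where
  | uncond : Finset Bool → CBallot I
  | cond : I → Finset (Bool × Bool) → CBallot I

/-- Whether the outcome `s` dissatisfies a ballot on issue `j`. -/
def dissat {I : Type} (s : I → Bool) (j : I) : CBallot I → Bool
  | CBallot.uncond A => decide (s j ∉ A)
  | CBallot.cond p A => decide ((s p, s j) ∉ A)

/-- The cost `Δ_P(s)`: the number of pairs (voter, issue) such that the voter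
is dissatisfied with the issue under the outcome `s`.  A profile is encoded
by its ballot function `b`. -/
def cost {I N : Type} [Fintype I] [Fintype N] (b : N → I → CBallot I)
    (s : I → Bool) : ℕ :=
  ∑ i : N, ∑ j : I, if dissat s j (b i j) then 1 else 0

/-- `OPT(P)`: the minimum of `Δ_P(s)` over all outcomes `s`. -/
noncomputable def OPT {I N : Type} [Fintype I] [Fintype N] (b : N → I → CBallot I) : ℕ :=
  sInf (Set.range (cost b))

/-- Whether a ballot is unconditional and dissatisfied by value `v`. -/
def uncondDis (v : Bool) : ∀ {I : Type}, CBallot I → Bool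
  | _, CBallot.uncond A => decide (v ∉ A)
  | _, CBallot.cond _ _ => false

/-- `cU b j v`: the number of voters whose ballot on issue `j` is
unconditional and dissatisfied when `j` takes value `v`. -/
def cU {I N : Type} [Fintype N] (b : N → I → CBallot I) (j : I) (v : Bool) : ℕ :=
  (Finset.univ.filter fun i : N => uncondDis v (b i j) = true).card

/-- Whether a ballot is conditional with the given parent and dissatisfied
when the parent takes value `u` and the issue itself takes value `v`. -/
def condDis {I : Type} [DecidableEq I] (parent : I) (u v : Bool) :
    CBallot I → Bool
  | CBallot.cond p A => if p = parent then decide ((u, v) ∉ A) else false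
  | CBallot.uncond _ => false

/-- `cC b p j u v`: the number of voters whose ballot on issue `j` is
conditional with parent `p` and who are dissatisfied with `j` when `p = u`
and `j = v`. -/
def cC {I N : Type} [DecidableEq I] [Fintype N] (b : N → I → CBallot I)
    (parent j : I) (u v : Bool) : ℕ :=
  (Finset.univ.filter fun i : N => condDis parent u v (b i j) = true).card

/-- Restriction of a ballot to the issue set `I \ {y}`: ballots conditional
with parent `y` are replaced by the unconditional ballot approving both
values. -/
def delBallot {I : Type} [DecidableEq I] (y : I) :
    CBallot I → CBallot {j : I // j ≠ y}
  | CBallot.uncond A => CBallot.uncond A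
  | CBallot.cond p A =>
      if h : p = y then CBallot.uncond {true, false} else CBallot.cond ⟨p, h⟩ A

/-- Extension of an outcome on `I \ {y}` to `I` by assigning `v` to `y`. -/
def extOut {I : Type} [DecidableEq I] (y : I) (s' : {j : I // j ≠ y} → Bool)
    (v : Bool) : I → Bool :=
  fun j => if h : j = y then v else s' ⟨j, h⟩

lemma dissat_del {I N : Type} [DecidableEq I] (b : N → I → CBallot I) (y : I)
    (hnoparentY : ∀ i j p A, b i j = CBallot.cond p A → p ≠ y)
    (s : I → Bool) (i : N) (j : {j : I // j ≠ y}) :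
    dissat (fun j => s j.1) j (delBallot y (b i j.1)) = dissat s j.1 (b i j.1) := by
  cases h : b i j.1 with
  | uncond A => simp [delBallot, dissat]
  | cond p A =>
    have hp : p ≠ y := hnoparentY i j.1 p A h
    simp [delBallot, hp, dissat]

lemma cost_split {I N : Type} [Fintype I] [DecidableEq I] [Fintype N]
    (b : N → I → CBallot I) (y : I)
    (huncondY : ∀ i, ∃ A, b i y = CBallot.uncond A)
    (hnoparentY : ∀ i j p A, b i j = CBallot.cond p A → p ≠ y)
    (s : I → Bool) :
    cost b s = cost (fun i (j : {j : I // j ≠ y}) => delBallot y (b i j.1))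
        (fun j => s j.1) + cU b y (s y) := by
  unfold cost
  rw [Finset.sum_comm]
  conv_rhs => rw [Finset.sum_comm]
  rw [← Finset.sum_erase_add _ _ (Finset.mem_univ y)]
  congr 1
  · rw [Finset.sum_subtype (p := fun j : I => j ≠ y) (Finset.univ.erase y)
      (fun x => by simp [Finset.mem_erase]) (fun j => ∑ i : N,
        if dissat s j (b i j) then 1 else 0)]
    refine Finset.sum_congr rfl fun j _ => Finset.sum_congr rfl fun i _ => ?_
    rw [dissat_del b y hnoparentY s i j]
  · rw [cU, Finset.card_filter]
    refine Finset.sum_congr rfl fun i _ => ?_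
    obtain ⟨A, hA⟩ := huncondY i
    simp [hA, dissat, uncondDis]

lemma restrict_extOut {I : Type} [DecidableEq I] (y : I)
    (s' : {j : I // j ≠ y} → Bool) (v : Bool) :
    (fun j : {j : I // j ≠ y} => extOut y s' v j.1) = s' := by
  funext j
  simp [extOut, j.2]

/-- If `y` has no neighbors in the global dependency graph (every ballot on
`y` is unconditional, and no ballot is conditional with parent `y`), then
deleting `y` decreases the optimum by exactly the least number of voters that
some value of `y` dissatisfies. -/
theorem opt_delete_isolated_issue {I N : Type} [Fintype I] [DecidableEq I]
    [Fintype N] (b : N → I → CBallot I) (y : I)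
    (hvalid : ∀ i j p A, b i j = CBallot.cond p A → p ≠ j)
    (huncondY : ∀ i, ∃ A, b i y = CBallot.uncond A)
    (hnoparentY : ∀ i j p A, b i j = CBallot.cond p A → p ≠ y) :
    OPT b = OPT (fun (i : N) (j : {j : I // j ≠ y}) => delBallot y (b i j.1))
      + min (cU b y true) (cU b y false) := by
  unfold OPT
  set b' := fun (i : N) (j : {j : I // j ≠ y}) => delBallot y (b i j.1) with hb'
  have hne : (Set.range (cost b)).Nonempty := Set.range_nonempty _
  have hne' : (Set.range (cost b')).Nonempty := Set.range_nonempty _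
  apply le_antisymm
  · obtain ⟨s', hs'⟩ := Nat.sInf_mem hne'
    set v : Bool := if cU b y true ≤ cU b y false then true else false with hv
    have hmin : cU b y v = min (cU b y true) (cU b y false) := by
      by_cases h : cU b y true ≤ cU b y false <;>
        simp [hv, h, min_eq_left, min_eq_right, Nat.min_def] <;> omega
    have hext : cost b (extOut y s' v) = sInf (Set.range (cost b')) + min (cU b y true) (cU b y false) := by
      rw [cost_split b y huncondY hnoparentY, restrict_extOut, hs']
      have : extOut y s' v y = v := by simp [extOut]
      rw [this, hmin]
    calc OPT b ≤ cost b (extOut y s' v) := Nat.sInf_le (Set.mem_range_self _)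
      _ = _ := hext
  · obtain ⟨s, hs⟩ := Nat.sInf_mem hne
    rw [← hs, cost_split b y huncondY hnoparentY]
    refine Nat.add_le_add (Nat.sInf_le (Set.mem_range_self _)) ?_
    cases h : s y <;> simp
end

section
/- Let P be a conditional approval profile of in-degree at most 1 and let y be an issue whose only neighbor in the global dependency graph of P is the issue x: every conditional ballot on y has parent x, and every conditional ballot with parent y is a ballot on x. For v ∈ Bool let c(y,v) be the number of voters with an unconditional ballot on y dissatisfied when y = v; for u,v ∈ Bool let c((x,u),(y,v)) be the number of voters whose ballot on y is conditional with parent x and who are dissatisfied with y when x = u and y = v, and let c((y,v),(x,u)) be the number of voters whose ballot on x is conditional with parent y and who are dissatisfied with x when y = v and x = u. For u ∈ Bool set c*(u) = min over v ∈ Bool of c(y,v) + c((x,u),(y,v)) + c((y,v),(x,u)). Let P' be the profile on I ∖ {y} obtained from P by: deleting y and all ballots on y; replacing every ballot on x that is conditional with parent y by the unconditional ballot approving both values; and, for each u ∈ Bool, adding c*(u) new voters, each with the unconditional ballot on x approving only the value ¬u and unconditional ballots approving both values on every other issue. Then for every outcome s' : I ∖ {y} → Bool, Δ_{P'}(s')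 equals the minimum over v ∈ Bool of Δ_P(s' extended by y ↦ v); in particular OPT(P) = OPT(P'). -/
/-- `c*(u)` from Case 2 of the lemma: the least number of dissatisfactions
that issue `y` (whose only neighbor is `x`) can cause, given that `x = u`. -/
def cstar2 {I N : Type} [DecidableEq I] [Fintype N] (b : N → I → CBallot I)
    (x y : I) (u : Bool) : ℕ :=
  min (cU b y true + cC b x y u true + cC b y x true u)
      (cU b y false + cC b x y u false + cC b y x false u)

/-- The reduced profile of Case 2: old voters get their ballots restricted to
`I \ {y}` (ballots conditional with parent `y` become unconditional approving
both values), and for each `u : Bool` we add `cst u` new voters dissatisfied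
only with the value `u` of `x`, and satisfied with everything else. -/
def newProf2 {I N : Type} [DecidableEq I] (b : N → I → CBallot I)
    (x y : I) (cst : Bool → ℕ) :
    (N ⊕ (Σ u : Bool, Fin (cst u))) → {j : I // j ≠ y} →
      CBallot {j : I // j ≠ y}
  | Sum.inl i, j => delBallot y (b i j.1)
  | Sum.inr ⟨u, _⟩, j =>
      if j.1 = x then CBallot.uncond {!u} else CBallot.uncond {true, false}

-- auxiliary lemmas

lemma sum_split {α : Type} [Fintype α] [DecidableEq α] (f : α → ℕ) (y : α) :
    ∑ j : α, f j = f y + ∑ j : {j : α // j ≠ y}, f j.1 := by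
  rw [← Finset.sum_subtype (Finset.univ.erase y) (by simp) f]
  rw [Finset.add_sum_erase _ f (Finset.mem_univ y)]

lemma card_filter_eq_sum {α : Type} [Fintype α] (p : α → Bool) :
    (Finset.univ.filter fun a => p a = true).card = ∑ a : α, if p a then 1 else 0 := by
  rw [Finset.card_filter]

lemma cost_ext {I N : Type} [Fintype I] [DecidableEq I]
    [Fintype N] (b : N → I → CBallot I) (x y : I) (hxy : x ≠ y)
    (hcondY : ∀ i p A, b i y = CBallot.cond p A → p = x)
    (hparentY : ∀ i j p A, b i j = CBallot.cond p A → p = y → j = x)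
    (s' : {j : I // j ≠ y} → Bool) (v : Bool) :
    cost b (extOut y s' v) =
      (∑ i : N, ∑ j : {j : I // j ≠ y}, if dissat s' j (delBallot y (b i j.1)) then 1 else 0)
      + (cU b y v + cC b x y (s' ⟨x, hxy⟩) v + cC b y x v (s' ⟨x, hxy⟩)) := by
  set s : I → Bool := extOut y s' v with hs
  set u : Bool := s' ⟨x, hxy⟩ with hu
  have hsy : s y = v := by simp [hs, extOut]
  have hsj : ∀ j : {j : I // j ≠ y}, s j.1 = s' j := by
    intro j
    simp [hs, extOut, j.2]
  have hsx : s x = u := hsj ⟨x, hxy⟩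
  have key : ∀ i : N, (∑ j : I, if dissat s j (b i j) then 1 else 0)
      = (∑ j : {j : I // j ≠ y}, if dissat s' j (delBallot y (b i j.1)) then 1 else 0)
        + ((if uncondDis v (b i y) then 1 else 0)
          + (if condDis x u v (b i y) then 1 else 0)
          + (if condDis y v u (b i x) then 1 else 0)) := by
    intro i
    rw [sum_split (fun j => if dissat s j (b i j) then 1 else 0) y]
    have hy : (if dissat s y (b i y) then 1 else 0)
        = (if uncondDis v (b i y) then 1 else 0) + (if condDis x u v (b i y) then 1 else 0) := by
      cases h : b i y with
      | uncond A => simp [dissat, uncondDis, condDis, hsy]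
      | cond p A =>
        have hp := hcondY i p A h
        subst hp
        simp [dissat, uncondDis, condDis, hsy, hsx]
    have hterm : ∀ j : {j : I // j ≠ y},
        (if dissat s j.1 (b i j.1) then 1 else 0)
        = (if dissat s' j (delBallot y (b i j.1)) then 1 else 0)
          + (if condDis y v u (b i j.1) then 1 else 0) := by
      intro j
      cases h : b i j.1 with
      | uncond A => simp [dissat, delBallot, condDis, hsj j]
      | cond p A =>
        by_cases hpy : p = y
        · subst hpy
          have hjx : j.1 = x := hparentY i j.1 p A h rfl
          have : s j.1 = u := by rw [hjx, hsx]
          simp [dissat, delBallot, condDis, hsy, this]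
        · have hp : s p = s' ⟨p, hpy⟩ := hsj ⟨p, hpy⟩
          simp [dissat, delBallot, condDis, hpy, hp, hsj j]
    have hrest : (∑ j : {j : I // j ≠ y}, if dissat s j.1 (b i j.1) then 1 else 0)
        = (∑ j : {j : I // j ≠ y}, if dissat s' j (delBallot y (b i j.1)) then 1 else 0)
          + (if condDis y v u (b i x) then 1 else 0) := by
      have h1 : (∑ j : {j : I // j ≠ y}, if dissat s j.1 (b i j.1) then 1 else 0)
          = (∑ j : {j : I // j ≠ y}, if dissat s' j (delBallot y (b i j.1)) then 1 else 0)
            + ∑ j : {j : I // j ≠ y}, if condDis y v u (b i j.1) then 1 else 0 := by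
        rw [← Finset.sum_add_distrib]
        exact Finset.sum_congr rfl fun j _ => hterm j
      rw [h1]
      congr 1
      rw [Finset.sum_eq_single (⟨x, hxy⟩ : {j : I // j ≠ y})]
      · intro j _ hjx
        cases h : b i j.1 with
        | uncond A => simp [condDis]
        | cond p A =>
          by_cases hpy : p = y
          · exfalso
            apply hjx
            have := hparentY i j.1 p A h hpy
            exact Subtype.ext this
          · simp [condDis, hpy]
      · intro h; exact absurd (Finset.mem_univ _) h
    rw [hy, hrest]
    ring
  calc cost b s = ∑ i : N, ∑ j : I, if dissat s j (b i j) then 1 else 0 := rfl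
    _ = ∑ i : N, ((∑ j : {j : I // j ≠ y}, if dissat s' j (delBallot y (b i j.1)) then 1 else 0)
        + ((if uncondDis v (b i y) then 1 else 0)
          + (if condDis x u v (b i y) then 1 else 0)
          + (if condDis y v u (b i x) then 1 else 0))) := Finset.sum_congr rfl fun i _ => key i
    _ = (∑ i : N, ∑ j : {j : I // j ≠ y}, if dissat s' j (delBallot y (b i j.1)) then 1 else 0)
        + ((∑ i : N, if uncondDis v (b i y) then 1 else 0)
          + (∑ i : N, if condDis x u v (b i y) then 1 else 0)
          + (∑ i : N, if condDis y v u (b i x) then 1 else 0)) := by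
      rw [Finset.sum_add_distrib, Finset.sum_add_distrib, Finset.sum_add_distrib]
    _ = _ := by
      rw [cU, cC, cC, card_filter_eq_sum, card_filter_eq_sum, card_filter_eq_sum]

theorem opt_delete_degree_one_issue {I N : Type} [Fintype I] [DecidableEq I]
    [Fintype N] (b : N → I → CBallot I) (x y : I) (hxy : x ≠ y)
    (hvalid : ∀ i j p A, b i j = CBallot.cond p A → p ≠ j)
    (hcondY : ∀ i p A, b i y = CBallot.cond p A → p = x)
    (hparentY : ∀ i j p A, b i j = CBallot.cond p A → p = y → j = x) :
    (∀ s' : {j : I // j ≠ y} → Bool,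
        cost (newProf2 b x y (cstar2 b x y)) s' =
          min (cost b (extOut y s' true)) (cost b (extOut y s' false))) ∧
    OPT b = OPT (newProf2 b x y (cstar2 b x y)) := by
  have main : ∀ s' : {j : I // j ≠ y} → Bool,
      cost (newProf2 b x y (cstar2 b x y)) s' =
        min (cost b (extOut y s' true)) (cost b (extOut y s' false)) := by
    intro s'
    set u : Bool := s' ⟨x, hxy⟩ with hu
    set A : ℕ := ∑ i : N, ∑ j : {j : I // j ≠ y},
        if dissat s' j (delBallot y (b i j.1)) then 1 else 0 with hA
    have hnew : cost (newProf2 b x y (cstar2 b x y)) s' = A + cstar2 b x y u := by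
      rw [cost, Fintype.sum_sum_type]
      congr 1
      rw [← Finset.univ_sigma_univ, Finset.sum_sigma]
      have hinner : ∀ (u' : Bool) (k : Fin (cstar2 b x y u')),
          (∑ j : {j : I // j ≠ y},
            if dissat s' j (newProf2 b x y (cstar2 b x y) (Sum.inr ⟨u', k⟩) j) then 1 else 0)
          = if u = u' then 1 else 0 := by
        intro u' k
        rw [Finset.sum_eq_single (⟨x, hxy⟩ : {j : I // j ≠ y})]
        · simp only [newProf2, if_pos rfl, dissat]
          rw [← hu]
          cases u <;> cases u' <;> simp
        · intro j _ hjx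
          have hjx' : j.1 ≠ x := fun h => hjx (Subtype.ext h)
          simp only [newProf2, if_neg hjx', dissat]
          cases hsj' : s' j <;> simp
        · intro h; exact absurd (Finset.mem_univ _) h
      have : (∑ u' : Bool, ∑ k : Fin (cstar2 b x y u'), ∑ j : {j : I // j ≠ y},
            if dissat s' j (newProf2 b x y (cstar2 b x y) (Sum.inr ⟨u', k⟩) j) then 1 else 0)
          = ∑ u' : Bool, ∑ _k : Fin (cstar2 b x y u'), if u = u' then 1 else 0 :=
        Finset.sum_congr rfl fun u' _ => Finset.sum_congr rfl fun k _ => hinner u' k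
      rw [this]
      cases hu' : u <;> simp [Fintype.sum_bool, Finset.sum_const, Finset.card_univ]
    have hext : ∀ v : Bool, cost b (extOut y s' v)
        = A + (cU b y v + cC b x y u v + cC b y x v u) :=
      fun v => cost_ext b x y hxy hcondY hparentY s' v
    rw [hnew, hext true, hext false]
    simp only [cstar2]
    omega
  refine ⟨main, le_antisymm ?_ ?_⟩
  · refine le_csInf (Set.range_nonempty _) ?_
    rintro n ⟨s', rfl⟩
    rw [main s']
    refine le_min (csInf_le (OrderBot.bddBelow _) ⟨_, rfl⟩)
      (csInf_le (OrderBot.bddBelow _) ⟨_, rfl⟩)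
  · refine le_csInf (Set.range_nonempty _) ?_
    rintro n ⟨s, rfl⟩
    set s' : {j : I // j ≠ y} → Bool := fun j => s j.1 with hs'
    have h1 : OPT (newProf2 b x y (cstar2 b x y)) ≤ cost (newProf2 b x y (cstar2 b x y)) s' :=
      csInf_le (OrderBot.bddBelow _) ⟨_, rfl⟩
    refine h1.trans ?_
    rw [main s']
    have hse : ∀ v : Bool, s y = v → extOut y s' v = s := by
      intro v hv
      funext j
      by_cases h : j = y
      · subst h; simp [extOut, hv]
      · simp [extOut, h, hs']
    cases hv : s y
    · rw [hse false hv]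
      exact min_le_right _ _
    · rw [hse true hv]
      exact min_le_left _ _
end

section
/- Let P be a conditional approval profile of in-degree at most 1 and let y be an issue whose only neighbors in the global dependency graph of P are the two issues x and z: every conditional ballot on y has parent x or parent z, and every conditional ballot with parent y is a ballot on x or on z. For v ∈ Bool let c(y,v) be the number of voters with an unconditional ballot on y dissatisfied when y = v; for issues a,b adjacent in the global graph and values u,v let c((a,u),(b,v)) be the number of voters whose ballot on b is conditional with parent a and who are dissatisfied with b when a = u and b = v. For u,w ∈ Bool set c*(u,w) = min over v ∈ Bool of c(y,v) + c((x,u),(y,v)) + c((y,v),(x,u)) + c((z,w),(y,v)) + c((y,v),(z,w)). Let P' be the profile on I ∖ {y} obtained from P by: deleting y and all ballots on y; replacing every ballot on x or on z that is conditional with parent y by the unconditional ballot approving both values; and, for each (u,w) ∈ Bool × Bool, adding c*(u,w) new voters, each with the conditional ballot on z with parent x approving all combinations except (u,w) and unconditional ballots approving both values on every other issue. Then P' has in-degree at most 1, for every outcome s' : I ∖ {y} → Bool, Δ_{P'}(s') equals the minimum over v ∈ Bool of Δ_P(s' extended by y ↦ v), and in particular OPT(P) = OPT(P'). -/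
/-- `c*(u, w)` from Case 3 of the lemma: the least number of dissatisfactions
that issue `y` (whose only neighbors are `x` and `z`) can cause, given that
`x = u` and `z = w`. -/
def cstar3 {I N : Type} [DecidableEq I] [Fintype N] (b : N → I → CBallot I)
    (x z y : I) (uw : Bool × Bool) : ℕ :=
  min (cU b y true + cC b x y uw.1 true + cC b y x true uw.1 +
        cC b z y uw.2 true + cC b y z true uw.2)
      (cU b y false + cC b x y uw.1 false + cC b y x false uw.1 +
        cC b z y uw.2 false + cC b y z false uw.2)

/-- The reduced profile of Case 3: old voters get their ballots restricted to
`I \ {y}` (ballots conditional with parent `y` become unconditional approving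
both values), and for each `(u, w) : Bool × Bool` we add `cst (u, w)` new
voters whose ballot on `z` is conditional with parent `x`, approving every
combination except `(u, w)`, and who approve both values on every other
issue. -/
def newProf3 {I N : Type} [DecidableEq I] (b : N → I → CBallot I)
    (x z y : I) (hxy : x ≠ y) (cst : Bool × Bool → ℕ) :
    (N ⊕ (Σ uw : Bool × Bool, Fin (cst uw))) → {j : I // j ≠ y} →
      CBallot {j : I // j ≠ y}
  | Sum.inl i, j => delBallot y (b i j.1)
  | Sum.inr ⟨uw, _⟩, j =>
      if j.1 = z then
        CBallot.cond ⟨x, hxy⟩ ((Finset.univ : Finset (Bool × Bool)).erase uw)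
      else CBallot.uncond {true, false}

section AuxOPT
variable {I N : Type} [Fintype I] [DecidableEq I] [Fintype N]

lemma extOut_ne {y : I} {s' : {j : I // j ≠ y} → Bool} {v : Bool} {j : I} (h : j ≠ y) :
    extOut y s' v j = s' ⟨j, h⟩ := dif_neg h

lemma extOut_self {y : I} {s' : {j : I // j ≠ y} → Bool} {v : Bool} :
    extOut y s' v y = v := dif_pos rfl

lemma E1 (b : N → I → CBallot I) (y : I)
    (s' : {j : I // j ≠ y} → Bool) (v : Bool) (i : N) (j : {j : I // j ≠ y}) :
    (if dissat (extOut y s' v) j.1 (b i j.1) then 1 else 0) =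
      (if dissat s' j (delBallot y (b i j.1)) then 1 else 0) +
      (if condDis y v (s' j) (b i j.1) then 1 else 0) := by
  rcases h : b i j.1 with A | ⟨p, A⟩
  · simp [dissat, delBallot, condDis, extOut_ne j.2]
  · by_cases hp : p = y
    · subst hp
      simp [dissat, delBallot, condDis, extOut_ne j.2, extOut_self]
    · simp [dissat, delBallot, condDis, hp, extOut_ne j.2, extOut_ne hp]

lemma E2 (b : N → I → CBallot I) (x z y : I) (hxy : x ≠ y) (hzy : z ≠ y) (hxz : x ≠ z)
    (hcondY : ∀ i p A, b i y = CBallot.cond p A → p = x ∨ p = z)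
    (s' : {j : I // j ≠ y} → Bool) (v : Bool) :
    (∑ i : N, if dissat (extOut y s' v) y (b i y) then 1 else 0) =
      cU b y v + cC b x y (s' ⟨x, hxy⟩) v + cC b z y (s' ⟨z, hzy⟩) v := by
  unfold cU cC
  rw [Finset.card_filter, Finset.card_filter, Finset.card_filter,
    ← Finset.sum_add_distrib, ← Finset.sum_add_distrib]
  refine Finset.sum_congr rfl fun i _ => ?_
  rcases h : b i y with A | ⟨p, A⟩
  · simp [dissat, uncondDis, condDis, extOut_self]
  · rcases hcondY i p A h with rfl | rfl
    · simp [dissat, uncondDis, condDis, extOut_self, extOut_ne hxy, hxz]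
    · simp [dissat, uncondDis, condDis, extOut_self, extOut_ne hzy, Ne.symm hxz]

lemma cC_zero (b : N → I → CBallot I) (x z y : I)
    (hparentY : ∀ i j p A, b i j = CBallot.cond p A → p = y → j = x ∨ j = z)
    (j : I) (hjx : j ≠ x) (hjz : j ≠ z) (u w : Bool) : cC b y j u w = 0 := by
  unfold cC
  rw [Finset.card_eq_zero, Finset.filter_eq_empty_iff]
  intro i _
  rcases h : b i j with A | ⟨p, A⟩
  · simp [condDis]
  · by_cases hp : p = y
    · rcases hparentY i j p A h hp with rfl | rfl
      · exact absurd rfl hjx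
      · exact absurd rfl hjz
    · simp [condDis, hp]

lemma costExt (b : N → I → CBallot I) (x z y : I) (hxy : x ≠ y) (hzy : z ≠ y) (hxz : x ≠ z)
    (hcondY : ∀ i p A, b i y = CBallot.cond p A → p = x ∨ p = z)
    (hparentY : ∀ i j p A, b i j = CBallot.cond p A → p = y → j = x ∨ j = z)
    (s' : {j : I // j ≠ y} → Bool) (v : Bool) :
    cost b (extOut y s' v) =
      (∑ i : N, ∑ j : {j : I // j ≠ y},
          if dissat s' j (delBallot y (b i j.1)) then 1 else 0) +
      (cU b y v + cC b x y (s' ⟨x, hxy⟩) v + cC b z y (s' ⟨z, hzy⟩) v +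
        cC b y x v (s' ⟨x, hxy⟩) + cC b y z v (s' ⟨z, hzy⟩)) := by
  unfold cost
  conv_lhs => rw [Finset.sum_comm]
  rw [← Finset.add_sum_erase (Finset.univ) _ (Finset.mem_univ y)]
  rw [Finset.sum_subtype (p := fun j => j ≠ y) (Finset.univ.erase y)
    (fun j => by simp)
    (fun j => ∑ i : N, if dissat (extOut y s' v) j (b i j) then 1 else 0)]
  rw [E2 b x z y hxy hzy hxz hcondY s' v]
  have hsplit : ∀ j : {j : I // j ≠ y},
      (∑ i : N, if dissat (extOut y s' v) j.1 (b i j.1) then 1 else 0) =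
        (∑ i : N, if dissat s' j (delBallot y (b i j.1)) then 1 else 0) +
          cC b y j.1 v (s' j) := by
    intro j
    unfold cC
    rw [Finset.card_filter, ← Finset.sum_add_distrib]
    exact Finset.sum_congr rfl fun i _ => E1 b y s' v i j
  rw [Finset.sum_congr rfl (fun j _ => hsplit j), Finset.sum_add_distrib]
  have h2 : (∑ j : {j : I // j ≠ y}, cC b y j.1 v (s' j)) =
      cC b y x v (s' ⟨x, hxy⟩) + cC b y z v (s' ⟨z, hzy⟩) := by
    refine Finset.sum_eq_add_of_mem (⟨x, hxy⟩ : {j : I // j ≠ y}) ⟨z, hzy⟩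
      (Finset.mem_univ _) (Finset.mem_univ _)
      (by simp [Subtype.ext_iff, hxz]) ?_
    intro c _ hc
    exact cC_zero b x z y hparentY c.1
      (fun h => hc.1 (Subtype.ext h)) (fun h => hc.2 (Subtype.ext h)) _ _
  rw [h2]
  rw [show (∑ j : {j : I // j ≠ y}, ∑ i : N,
      if dissat s' j (delBallot y (b i j.1)) then 1 else 0) =
      ∑ i : N, ∑ j : {j : I // j ≠ y},
      if dissat s' j (delBallot y (b i j.1)) then 1 else 0 from Finset.sum_comm]
  omega

lemma costNew (b : N → I → CBallot I) (x z y : I) (hxy : x ≠ y) (hzy : z ≠ y) (hxz : x ≠ z)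
    (cst : Bool × Bool → ℕ) (s' : {j : I // j ≠ y} → Bool) :
    cost (newProf3 b x z y hxy cst) s' =
      (∑ i : N, ∑ j : {j : I // j ≠ y},
          if dissat s' j (delBallot y (b i j.1)) then 1 else 0) +
      cst (s' ⟨x, hxy⟩, s' ⟨z, hzy⟩) := by
  unfold cost
  rw [Fintype.sum_sum_type]
  congr 1
  rw [← Finset.univ_sigma_univ, Finset.sum_sigma]
  have hinner : ∀ uw : Bool × Bool, ∀ k : Fin (cst uw),
      (∑ j : {j : I // j ≠ y},
        if dissat s' j (newProf3 b x z y hxy cst (Sum.inr ⟨uw, k⟩) j) then 1 else 0) =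
      if (s' ⟨x, hxy⟩, s' ⟨z, hzy⟩) = uw then 1 else 0 := by
    intro uw k
    rw [Finset.sum_eq_single_of_mem (⟨z, hzy⟩ : {j : I // j ≠ y}) (Finset.mem_univ _)]
    · have : newProf3 b x z y hxy cst (Sum.inr ⟨uw, k⟩) ⟨z, hzy⟩ =
          CBallot.cond ⟨x, hxy⟩ ((Finset.univ : Finset (Bool × Bool)).erase uw) := by
        simp [newProf3]
      rw [this]
      simp [dissat, Finset.mem_erase]
    · intro j _ hj
      have hjz : j.1 ≠ z := fun h => hj (Subtype.ext h)
      have : newProf3 b x z y hxy cst (Sum.inr ⟨uw, k⟩) j =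
          CBallot.uncond {true, false} := by
        simp [newProf3, hjz]
      rw [this]
      cases hsj : s' j <;> simp [dissat, hsj]
  rw [Finset.sum_congr rfl (fun uw _ => Finset.sum_congr rfl (fun k _ => hinner uw k))]
  rw [Finset.sum_congr rfl (fun uw _ => Finset.sum_const _)]
  simp only [Finset.card_univ, Fintype.card_fin, smul_eq_mul]
  rw [Finset.sum_eq_single_of_mem (s' ⟨x, hxy⟩, s' ⟨z, hzy⟩) (Finset.mem_univ _)]
  · simp
  · intro uw _ huw
    simp [Ne.symm huw]

end AuxOPT

theorem opt_delete_degree_two_issue {I N : Type} [Fintype I] [DecidableEq I]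
    [Fintype N] (b : N → I → CBallot I) (x z y : I)
    (hxy : x ≠ y) (hzy : z ≠ y) (hxz : x ≠ z)
    (hvalid : ∀ i j p A, b i j = CBallot.cond p A → p ≠ j)
    (hcondY : ∀ i p A, b i y = CBallot.cond p A → p = x ∨ p = z)
    (hparentY : ∀ i j p A, b i j = CBallot.cond p A → p = y → j = x ∨ j = z) :
    (∀ i j p A, newProf3 b x z y hxy (cstar3 b x z y) i j = CBallot.cond p A →
        p ≠ j) ∧
    (∀ s' : {j : I // j ≠ y} → Bool,
        cost (newProf3 b x z y hxy (cstar3 b x z y)) s' =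
          min (cost b (extOut y s' true)) (cost b (extOut y s' false))) ∧
    OPT b = OPT (newProf3 b x z y hxy (cstar3 b x z y)) := by
  have key : ∀ s' : {j : I // j ≠ y} → Bool,
      cost (newProf3 b x z y hxy (cstar3 b x z y)) s' =
        min (cost b (extOut y s' true)) (cost b (extOut y s' false)) := by
    intro s'
    rw [costNew b x z y hxy hzy hxz (cstar3 b x z y) s',
      costExt b x z y hxy hzy hxz hcondY hparentY s' true,
      costExt b x z y hxy hzy hxz hcondY hparentY s' false]
    simp only [cstar3]
    omega
  refine ⟨?_, key, ?_⟩
  · rintro (i | ⟨uw, k⟩) j p A h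
    · rcases hb : b i j.1 with A' | ⟨q, B⟩
      · simp [newProf3, delBallot, hb] at h
      · by_cases hq : q = y
        · subst hq; simp [newProf3, delBallot, hb] at h
        · have h2 : CBallot.cond (⟨q, hq⟩ : {j : I // j ≠ y}) B = CBallot.cond p A := by
            simpa [newProf3, delBallot, hb, hq] using h
          obtain ⟨hpq, -⟩ := CBallot.cond.inj h2
          intro hpj
          exact hvalid i j.1 q B hb (congrArg Subtype.val (hpq.trans hpj))
    · by_cases hz : j.1 = z
      · have h2 : CBallot.cond (⟨x, hxy⟩ : {j : I // j ≠ y})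
            ((Finset.univ : Finset (Bool × Bool)).erase uw) = CBallot.cond p A := by
          simpa [newProf3, hz] using h
        obtain ⟨hpq, -⟩ := CBallot.cond.inj h2
        intro hpj
        exact hxz (by rw [show x = p.1 from congrArg Subtype.val hpq,
          show p.1 = j.1 from congrArg Subtype.val hpj, hz])
      · simp [newProf3, hz] at h
  · have hne1 : (Set.range (cost b)).Nonempty := ⟨_, ⟨fun _ => true, rfl⟩⟩
    have hne2 : (Set.range (cost (newProf3 b x z y hxy (cstar3 b x z y)))).Nonempty :=
      ⟨_, ⟨fun _ => true, rfl⟩⟩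
    apply le_antisymm
    · obtain ⟨s', hs'⟩ := Nat.sInf_mem hne2
      unfold OPT
      rw [← hs', key s']
      rcases le_total (cost b (extOut y s' true)) (cost b (extOut y s' false)) with h | h
      · rw [min_eq_left h]; exact Nat.sInf_le ⟨_, rfl⟩
      · rw [min_eq_right h]; exact Nat.sInf_le ⟨_, rfl⟩
    · obtain ⟨s, hs⟩ := Nat.sInf_mem hne1
      unfold OPT
      rw [← hs]
      have hrestr : extOut y (fun j : {j : I // j ≠ y} => s j.1) (s y) = s := by
        funext j
        unfold extOut
        split
        · next h => rw [h]
        · rfl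
      calc sInf (Set.range (cost (newProf3 b x z y hxy (cstar3 b x z y))))
          ≤ cost (newProf3 b x z y hxy (cstar3 b x z y))
              (fun j : {j : I // j ≠ y} => s j.1) := Nat.sInf_le ⟨_, rfl⟩
        _ = min (cost b (extOut y (fun j : {j : I // j ≠ y} => s j.1) true))
              (cost b (extOut y (fun j : {j : I // j ≠ y} => s j.1) false)) := key _
        _ ≤ cost b s := by
            conv_rhs => rw [← hrestr]
            cases s y
            · exact min_le_right _ _
            · exact min_le_left _ _
end
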